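/- For all integers k ≥ 3, s ≥ 3 and n ≥ k + s, sat(n, K_s ∨ P_k) ≤ C(s,2) + s(n − s) + sat(n − s, P_k), where C(s,2) = s(s−1)/2. -/

import Mathlib

open SimpleGraph

/-- The join `G₁ ∨ G₂` of two simple graphs: disjoint union plus all edges in between. -/
def SimpleGraph.graphJoin {α β : Type*} (G : SimpleGraph α) (H : SimpleGraph β) :
    SimpleGraph (α ⊕ β) where
  Adj x y :=
    match x, y with
    | Sum.inl a, Sum.inl b => G.Adj a b
    | Sum.inr a, Sum.inr b => H.Adj a b
    | Sum.inl _, Sum.inr _ => True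
    | Sum.inr _, Sum.inl _ => True
  symm := by
    refine ⟨?_⟩
    rintro (a | a) (b | b) h
    · exact G.adj_symm h
    · trivial
    · trivial
    · exact H.adj_symm h
  loopless := by
    refine ⟨?_⟩
    rintro (a | a) h
    · exact G.irrefl h
    · exact H.irrefl h

/-- `H.Contains G` : `G` contains a copy of `H`, i.e. a subgraph isomorphic to `H`,
equivalently there is an injective graph homomorphism `H →g G`. -/
def SimpleGraph.Contains {α β : Type*} (H : SimpleGraph α) (G : SimpleGraph β) : Prop :=
  ∃ f : H →g G, Function.Injective f

/-- `H.IsSatur G` : the graph `G` is `H`-saturated: it contains no copy of `H`, but adding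
any edge between distinct nonadjacent vertices creates a copy of `H`. -/
def SimpleGraph.IsSatur {α β : Type*} (H : SimpleGraph α) (G : SimpleGraph β) : Prop :=
  ¬ H.Contains G ∧ ∀ u v : β, u ≠ v → ¬ G.Adj u v →
    H.Contains (G ⊔ SimpleGraph.fromEdgeSet {s(u, v)})

/-- `satNumber n H` : the saturation number of `H`, the minimum number of edges in an
`H`-saturated graph of order `n`. -/
noncomputable def satNumber {α : Type*} (n : ℕ) (H : SimpleGraph α) : ℕ :=
  sInf {m : ℕ | ∃ G : SimpleGraph (Fin n), H.IsSatur G ∧ G.edgeSet.ncard = m}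

section Aux

variable {α β γ : Type*}

private lemma contains_of_iso {H : SimpleGraph α} {G : SimpleGraph β} {G₂ : SimpleGraph γ}
    (φ : G ≃g G₂) (h : H.Contains G) : H.Contains G₂ := by
  obtain ⟨f, hf⟩ := h
  refine ⟨φ.toHom.comp f, ?_⟩
  intro a b hab
  exact hf (φ.injective hab)

private lemma ncard_eq_of_iso {G : SimpleGraph β} {G₂ : SimpleGraph γ} (φ : G ≃g G₂) :
    G.edgeSet.ncard = G₂.edgeSet.ncard := by
  rw [← Nat.card_coe_set_eq, ← Nat.card_coe_set_eq]
  exact Nat.card_congr φ.mapEdgeSet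

private lemma comap_sup' (f : β → γ) (G₁ G₂ : SimpleGraph γ) :
    (G₁ ⊔ G₂).comap f = G₁.comap f ⊔ G₂.comap f := rfl

private lemma comap_fromEdgeSet_pair {f : β → γ} (hf : Function.Injective f) (u v : β) :
    (SimpleGraph.fromEdgeSet {s(f u, f v)}).comap f = SimpleGraph.fromEdgeSet {s(u, v)} := by
  ext a b
  simp only [comap_adj, fromEdgeSet_adj, Set.mem_singleton_iff]
  constructor
  · rintro ⟨h1, h2⟩
    refine ⟨?_, fun h => h2 (congrArg f h)⟩
    have h3 : Sym2.map f s(a, b) = Sym2.map f s(u, v) := by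
      simpa [Sym2.map_pair_eq] using h1
    exact Sym2.map.injective hf h3
  · rintro ⟨h1, h2⟩
    constructor
    · have : Sym2.map f s(a, b) = Sym2.map f s(u, v) := by rw [h1]
      simpa [Sym2.map_pair_eq] using this
    · exact fun h => h2 (hf h)

private lemma isSatur_comap {H : SimpleGraph α} {G : SimpleGraph γ} (e : β ≃ γ)
    (h : H.IsSatur G) : H.IsSatur (G.comap e.toEmbedding) := by
  obtain ⟨hfree, hsat⟩ := h
  constructor
  · intro hc
    exact hfree (contains_of_iso (SimpleGraph.Iso.comap e G) hc)
  · intro u v huv hadj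
    have h2 : ¬ G.Adj (e u) (e v) := hadj
    have hc := hsat (e u) (e v) (fun hh => huv (e.injective hh)) h2
    have heq : (G ⊔ SimpleGraph.fromEdgeSet {s(e u, e v)}).comap ⇑e.toEmbedding
        = G.comap ⇑e.toEmbedding ⊔ SimpleGraph.fromEdgeSet {s(u, v)} := by
      rw [comap_sup']
      congr 1
      exact comap_fromEdgeSet_pair (f := ⇑e.toEmbedding) e.injective u v
    have hc2 := contains_of_iso (SimpleGraph.Iso.comap e
        (G ⊔ SimpleGraph.fromEdgeSet {s(e u, e v)})).symm hc
    rw [show (⇑e.toEmbedding : β → γ) = ⇑e from rfl] at heq ⊢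
    rwa [heq] at hc2

private lemma pathGraph_free_bot (k m : ℕ) (hk : 2 ≤ k) :
    ¬ (SimpleGraph.pathGraph k).Contains (⊥ : SimpleGraph (Fin m)) := by
  rintro ⟨f, -⟩
  have hadj : (SimpleGraph.pathGraph k).Adj ⟨0, by omega⟩ ⟨1, by omega⟩ := by
    rw [SimpleGraph.pathGraph_adj]
    left; rfl
  simpa using f.map_rel hadj

private lemma exists_pathSat (k m : ℕ) (hk : 2 ≤ k) :
    ∃ G : SimpleGraph (Fin m), (SimpleGraph.pathGraph k).IsSatur G := by
  classical
  set S : Set (SimpleGraph (Fin m)) := {G | ¬ (SimpleGraph.pathGraph k).Contains G} with hS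
  have hfin : S.Finite := Set.toFinite S
  have hbot : (⊥ : SimpleGraph (Fin m)) ∈ S := pathGraph_free_bot k m hk
  obtain ⟨G, hG, hmax⟩ := Set.Finite.exists_maximalFor (fun G => G.edgeSet.ncard) S hfin ⟨_, hbot⟩
  refine ⟨G, hG, fun u v huv hadj => ?_⟩
  by_contra hfree
  have hmem : G ⊔ SimpleGraph.fromEdgeSet {s(u, v)} ∈ S := hfree
  have hE : (G ⊔ SimpleGraph.fromEdgeSet {s(u, v)}).edgeSet = insert s(u, v) G.edgeSet := by
    rw [SimpleGraph.edgeSet_sup, SimpleGraph.edgeSet_fromEdgeSet]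
    ext e
    simp only [Set.mem_union, Set.mem_diff, Set.mem_singleton_iff, Set.mem_setOf_eq,
      Set.mem_insert_iff]
    constructor
    · rintro (h | ⟨rfl, -⟩)
      · exact Or.inr h
      · exact Or.inl rfl
    · rintro (rfl | h)
      · exact Or.inr ⟨rfl, by simp [Sym2.mk_isDiag_iff, huv]⟩
      · exact Or.inl h
  have hnm : s(u, v) ∉ G.edgeSet := fun hmem' => hadj (G.mem_edgeSet.mp hmem')
  have hlt : G.edgeSet.ncard < (G ⊔ SimpleGraph.fromEdgeSet {s(u, v)}).edgeSet.ncard := by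
    rw [hE, Set.ncard_insert_of_notMem hnm (Set.toFinite _)]
    omega
  have : (G ⊔ SimpleGraph.fromEdgeSet {s(u, v)}).edgeSet.ncard ≤ G.edgeSet.ncard :=
    hmax hmem hlt.le
  omega

private lemma join_free {s k m : ℕ} (hs : 0 < s) (hm : 0 < m) {G' : SimpleGraph (Fin m)}
    (hfree : ¬ (SimpleGraph.pathGraph k).Contains G') :
    ¬ ((⊤ : SimpleGraph (Fin s)).graphJoin (SimpleGraph.pathGraph k)).Contains
      ((⊤ : SimpleGraph (Fin s)).graphJoin G') := by
  classical
  rintro ⟨f, hf⟩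
  apply hfree
  set A : Finset (Fin s) := Finset.univ.filter (fun a => (f (Sum.inl a)).isLeft) with hA
  set A' : Finset (Fin s) := Finset.univ.filter (fun a => ¬ (f (Sum.inl a)).isLeft) with hA'
  set B : Finset (Fin k) := Finset.univ.filter (fun i => (f (Sum.inr i)).isLeft) with hB
  have hAA' : A.card + A'.card = s := by
    rw [hA, hA', Finset.card_filter_add_card_filter_not]
    simp
  set toL : Fin s ⊕ Fin m → Fin s := Sum.elim id (fun _ => ⟨0, hs⟩) with htoL
  set toR : Fin s ⊕ Fin m → Fin m := Sum.elim (fun _ => ⟨0, hm⟩) id with htoR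
  have keyL : ∀ x : Fin s ⊕ Fin m, x.isLeft → x = Sum.inl (toL x) := by
    rintro (a | b) h
    · rfl
    · simp at h
  have keyR : ∀ x : Fin s ⊕ Fin m, ¬ x.isLeft → x = Sum.inr (toR x) := by
    rintro (a | b) h
    · simp at h
    · rfl
  have hcard2 : A.card + B.card ≤ s := by
    set ψ : (↑A ⊕ ↑B : Type) → Fin s :=
      Sum.elim (fun a => toL (f (Sum.inl a.1))) (fun i => toL (f (Sum.inr i.1))) with hψdef
    have hmemA : ∀ a : Fin s, a ∈ A → (f (Sum.inl a)).isLeft := by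
      intro a ha; rw [hA] at ha; simpa using (Finset.mem_filter.mp ha).2
    have hmemB : ∀ i : Fin k, i ∈ B → (f (Sum.inr i)).isLeft := by
      intro i hi; rw [hB] at hi; simpa using (Finset.mem_filter.mp hi).2
    have hψ : Function.Injective ψ := by
      rintro (⟨a, ha⟩ | ⟨i, hi⟩) (⟨b, hb⟩ | ⟨j, hj⟩) h
      · have h1 := keyL _ (hmemA a ha)
        have h2 := keyL _ (hmemA b hb)
        have : f (Sum.inl a) = f (Sum.inl b) := by
          rw [h1, h2]; exact congrArg _ h
        have := hf this
        simp only [Sum.inl.injEq] at this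
        exact congrArg Sum.inl (Subtype.ext this)
      · exfalso
        have h1 := keyL _ (hmemA a ha)
        have h2 := keyL _ (hmemB j hj)
        have : f (Sum.inl a) = f (Sum.inr j) := by
          rw [h1, h2]; exact congrArg _ h
        exact absurd (hf this) (by simp)
      · exfalso
        have h1 := keyL _ (hmemB i hi)
        have h2 := keyL _ (hmemA b hb)
        have : f (Sum.inr i) = f (Sum.inl b) := by
          rw [h1, h2]; exact congrArg _ h
        exact absurd (hf this) (by simp)
      · have h1 := keyL _ (hmemB i hi)
        have h2 := keyL _ (hmemB j hj)
        have : f (Sum.inr i) = f (Sum.inr j) := by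
          rw [h1, h2]; exact congrArg _ h
        have := hf this
        simp only [Sum.inr.injEq] at this
        exact congrArg Sum.inr (Subtype.ext this)
    have := Fintype.card_le_of_injective ψ hψ
    simpa [Fintype.card_sum] using this
  have hBA' : B.card ≤ A'.card := by omega
  obtain ⟨A'', hsubA'', hcardA''⟩ := Finset.exists_subset_card_eq hBA'
  have hcards : Fintype.card (↑B : Type) = Fintype.card (↑A'' : Type) := by
    simp [Fintype.card_coe, hcardA'']
  set ρ0 : (↑B : Type) ≃ (↑A'' : Type) := Fintype.equivOfCardEq hcards with hρ0
  set ρ : Fin k → Fin s := fun i => if h : i ∈ B then (ρ0 ⟨i, h⟩ : Fin s) else ⟨0, hs⟩ with hρ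
  have hρmem : ∀ i (h : i ∈ B), ¬ (f (Sum.inl (ρ i))).isLeft := by
    intro i h
    have hmem : ρ i ∈ A' := by
      rw [hρ]; simp only [dif_pos h]
      exact hsubA'' (ρ0 ⟨i, h⟩).2
    rw [hA'] at hmem
    simpa using (Finset.mem_filter.mp hmem).2
  have hρinj : ∀ i j, i ∈ B → j ∈ B → ρ i = ρ j → i = j := by
    intro i j hi hj h
    rw [hρ] at h
    simp only [dif_pos hi, dif_pos hj] at h
    have h2 := ρ0.injective (Subtype.ext h)
    exact congrArg Subtype.val h2
  have hmemBnot : ∀ i : Fin k, i ∉ B → ¬ (f (Sum.inr i)).isLeft := by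
    intro i hi
    rw [hB] at hi
    simpa using fun h => hi (Finset.mem_filter.mpr ⟨Finset.mem_univ _, h⟩)
  set g : Fin k → Fin m := fun i =>
    if h : i ∈ B then toR (f (Sum.inl (ρ i))) else toR (f (Sum.inr i)) with hg
  have eqn1 : ∀ i, i ∈ B → f (Sum.inl (ρ i)) = Sum.inr (g i) := by
    intro i h
    rw [hg]; simp only [dif_pos h]
    exact keyR _ (hρmem i h)
  have eqn2 : ∀ i, i ∉ B → f (Sum.inr i) = Sum.inr (g i) := by
    intro i h
    rw [hg]; simp only [dif_neg h]
    exact keyR _ (hmemBnot i h)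
  refine ⟨⟨g, ?_⟩, ?_⟩
  · -- hom property
    intro i j hadj
    show G'.Adj (g i) (g j)
    have hij : i ≠ j := hadj.ne
    by_cases hi : i ∈ B <;> by_cases hj : j ∈ B
    · have hρne : ρ i ≠ ρ j := fun h => hij (hρinj i j hi hj h)
      have hHadj : ((⊤ : SimpleGraph (Fin s)).graphJoin (SimpleGraph.pathGraph k)).Adj
          (Sum.inl (ρ i)) (Sum.inl (ρ j)) := hρne
      have h3 := f.map_rel hHadj
      rw [eqn1 i hi, eqn1 j hj] at h3
      exact h3
    · have hHadj : ((⊤ : SimpleGraph (Fin s)).graphJoin (SimpleGraph.pathGraph k)).Adj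
          (Sum.inl (ρ i)) (Sum.inr j) := trivial
      have h3 := f.map_rel hHadj
      rw [eqn1 i hi, eqn2 j hj] at h3
      exact h3
    · have hHadj : ((⊤ : SimpleGraph (Fin s)).graphJoin (SimpleGraph.pathGraph k)).Adj
          (Sum.inr i) (Sum.inl (ρ j)) := trivial
      have h3 := f.map_rel hHadj
      rw [eqn2 i hi, eqn1 j hj] at h3
      exact h3
    · have hHadj : ((⊤ : SimpleGraph (Fin s)).graphJoin (SimpleGraph.pathGraph k)).Adj
          (Sum.inr i) (Sum.inr j) := hadj
      have h3 := f.map_rel hHadj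
      rw [eqn2 i hi, eqn2 j hj] at h3
      exact h3
  · -- injectivity
    intro i j h
    replace h : g i = g j := h
    by_cases hi : i ∈ B <;> by_cases hj : j ∈ B
    · have : f (Sum.inl (ρ i)) = f (Sum.inl (ρ j)) := by
        rw [eqn1 i hi, eqn1 j hj, h]
      have := hf this
      simp only [Sum.inl.injEq] at this
      exact hρinj i j hi hj this
    · exfalso
      have : f (Sum.inl (ρ i)) = f (Sum.inr j) := by
        rw [eqn1 i hi, eqn2 j hj, h]
      exact absurd (hf this) (by simp)
    · exfalso
      have : f (Sum.inr i) = f (Sum.inl (ρ j)) := by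
        rw [eqn2 i hi, eqn1 j hj, h]
      exact absurd (hf this) (by simp)
    · have : f (Sum.inr i) = f (Sum.inr j) := by
        rw [eqn2 i hi, eqn2 j hj, h]
      have := hf this
      simpa using this

private lemma join_sat {s k m : ℕ} (G' : SimpleGraph (Fin m)) (u v : Fin m)
    (h : (SimpleGraph.pathGraph k).Contains (G' ⊔ SimpleGraph.fromEdgeSet {s(u, v)})) :
    ((⊤ : SimpleGraph (Fin s)).graphJoin (SimpleGraph.pathGraph k)).Contains
      ((⊤ : SimpleGraph (Fin s)).graphJoin G' ⊔
        SimpleGraph.fromEdgeSet {s(Sum.inr u, (Sum.inr v : Fin s ⊕ Fin m))}) := by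
  obtain ⟨p, hp⟩ := h
  refine ⟨⟨Sum.map id p, ?_⟩, ?_⟩
  · rintro (a | i) (b | j) hadj
    · exact Or.inl hadj
    · exact Or.inl trivial
    · exact Or.inl trivial
    · have h2 := p.map_rel hadj
      rcases h2 with h2 | h2
      · exact Or.inl h2
      · right
        rw [SimpleGraph.fromEdgeSet_adj] at h2 ⊢
        obtain ⟨h3, h4⟩ := h2
        rw [Set.mem_singleton_iff] at h3
        constructor
        · rw [Set.mem_singleton_iff]
          rw [Sym2.eq_iff] at h3 ⊢
          rcases h3 with ⟨h5, h6⟩ | ⟨h5, h6⟩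
          · exact Or.inl ⟨by simp only [Sum.map_inr]; rw [h5], by simp only [Sum.map_inr]; rw [h6]⟩
          · exact Or.inr ⟨by simp only [Sum.map_inr]; rw [h5], by simp only [Sum.map_inr]; rw [h6]⟩
        · simpa using h4
  · show Function.Injective (Sum.map id (⇑p))
    rintro (a | i) (b | j) h
    · simpa using h
    · simp at h
    · simp at h
    · simp only [Sum.map_inr, Sum.inr.injEq] at h
      exact congrArg Sum.inr (hp h)

private lemma join_isSatur {s k m : ℕ} (hs : 0 < s) (hm : 0 < m) {G' : SimpleGraph (Fin m)}
    (hG' : (SimpleGraph.pathGraph k).IsSatur G') :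
    ((⊤ : SimpleGraph (Fin s)).graphJoin (SimpleGraph.pathGraph k)).IsSatur
      ((⊤ : SimpleGraph (Fin s)).graphJoin G') := by
  obtain ⟨hfree, hsat⟩ := hG'
  constructor
  · exact join_free hs hm hfree
  · rintro (a | u) (b | v) hne hadj
    · exact absurd (show a ≠ b from fun h => hne (congrArg Sum.inl h)) (fun h => hadj h)
    · exact absurd trivial hadj
    · exact absurd trivial hadj
    · have huv : u ≠ v := fun h => hne (congrArg Sum.inr h)
      have hnadj : ¬ G'.Adj u v := hadj
      exact join_sat G' u v (hsat u v huv hnadj)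

private lemma edgeSet_map' (f : α ↪ β) (G : SimpleGraph α) :
    (G.map f).edgeSet = Sym2.map ⇑f '' G.edgeSet := by
  ext e
  induction e with
  | _ x y =>
    simp only [SimpleGraph.mem_edgeSet, SimpleGraph.map_adj, Set.mem_image]
    constructor
    · rintro ⟨a, b, hab, ha, hb⟩
      exact ⟨s(a, b), hab, by rw [Sym2.map_pair_eq, ha, hb]⟩
    · rintro ⟨e', he', heq⟩
      induction e' with
      | _ a b =>
        rw [Sym2.map_pair_eq, Sym2.eq_iff] at heq
        rcases heq with ⟨h1, h2⟩ | ⟨h1, h2⟩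
        · exact ⟨a, b, he', h1, h2⟩
        · exact ⟨b, a, (G.mem_edgeSet.mp he').symm, h2, h1⟩

private lemma compl_join {s m : ℕ} (G' : SimpleGraph (Fin m)) :
    ((⊤ : SimpleGraph (Fin s)).graphJoin G')ᶜ
      = G'ᶜ.map (⟨Sum.inr, Sum.inr_injective⟩ : Fin m ↪ Fin s ⊕ Fin m) := by
  ext x y
  cases x with
  | inl a =>
    cases y with
    | inl b =>
      simp only [SimpleGraph.compl_adj, SimpleGraph.map_adj]
      constructor
      · rintro ⟨h1, h2⟩
        exact absurd (show a ≠ b from fun h => h1 (congrArg Sum.inl h)) (fun h => h2 h)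
      · rintro ⟨c, d, -, hc, -⟩
        exact absurd hc (by simp)
    | inr b =>
      simp only [SimpleGraph.compl_adj, SimpleGraph.map_adj]
      constructor
      · rintro ⟨h1, h2⟩
        exact absurd trivial h2
      · rintro ⟨c, d, -, hc, -⟩
        exact absurd hc (by simp)
  | inr a =>
    cases y with
    | inl b =>
      simp only [SimpleGraph.compl_adj, SimpleGraph.map_adj]
      constructor
      · rintro ⟨h1, h2⟩
        exact absurd trivial h2
      · rintro ⟨c, d, -, -, hd⟩
        exact absurd hd (by simp)
    | inr b =>
      simp only [SimpleGraph.compl_adj, SimpleGraph.map_adj]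
      constructor
      · rintro ⟨h1, h2⟩
        exact ⟨a, b, ⟨fun h => h1 (congrArg Sum.inr h), fun h => h2 h⟩, rfl, rfl⟩
      · rintro ⟨c, d, hcd, hc, hd⟩
        simp only [Function.Embedding.coeFn_mk, Sum.inr.injEq] at hc hd
        subst hc; subst hd
        obtain ⟨h1, h2⟩ := hcd
        exact ⟨fun h => h1 (by injection h), fun h => h2 h⟩

private lemma ncard_add_ncard_compl {V : Type*} [Fintype V] [DecidableEq V]
    (G : SimpleGraph V) :
    G.edgeSet.ncard + Gᶜ.edgeSet.ncard = (Fintype.card V).choose 2 := by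
  classical
  have hdisj : Disjoint G.edgeSet Gᶜ.edgeSet := by
    rw [Set.disjoint_iff_inter_eq_empty, ← SimpleGraph.edgeSet_inf]
    simp
  rw [← Set.ncard_union_eq hdisj (Set.toFinite _) (Set.toFinite _), ← SimpleGraph.edgeSet_sup,
    sup_compl_eq_top, ← SimpleGraph.card_edgeFinset_top_eq_card_choose_two,
    Set.ncard_eq_toFinset_card', SimpleGraph.edgeFinset]

private lemma choose_two_add (s m : ℕ) :
    (s + m).choose 2 = s.choose 2 + m.choose 2 + s * m := by
  induction s with
  | zero => simp
  | succ t ih =>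
    have h1 : (t + 1 + m).choose 2 = (t + m).choose 1 + (t + m).choose 2 := by
      rw [show t + 1 + m = (t + m) + 1 by omega]
      rw [Nat.choose_succ_succ]
    have h2 : (t + 1).choose 2 = t.choose 1 + t.choose 2 := Nat.choose_succ_succ t 1
    have h3 : (t + 1) * m = t * m + m := by ring
    simp only [Nat.choose_one_right] at h1 h2
    omega

private lemma ncard_join {s m : ℕ} (G' : SimpleGraph (Fin m)) :
    ((⊤ : SimpleGraph (Fin s)).graphJoin G').edgeSet.ncard
      = s * (s - 1) / 2 + s * m + G'.edgeSet.ncard := by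
  classical
  set J := (⊤ : SimpleGraph (Fin s)).graphJoin G' with hJ
  have h1 : J.edgeSet.ncard + Jᶜ.edgeSet.ncard = (s + m).choose 2 := by
    have := ncard_add_ncard_compl J
    rwa [show Fintype.card (Fin s ⊕ Fin m) = s + m by simp] at this
  have h2 : G'.edgeSet.ncard + G'ᶜ.edgeSet.ncard = m.choose 2 := by
    have := ncard_add_ncard_compl G'
    rwa [Fintype.card_fin] at this
  have h3 : Jᶜ.edgeSet.ncard = G'ᶜ.edgeSet.ncard := by
    rw [hJ, compl_join, edgeSet_map']
    exact Set.ncard_image_of_injective _ (Sym2.map.injective Sum.inr_injective)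
  have h4 := choose_two_add s m
  have h5 : s.choose 2 = s * (s - 1) / 2 := Nat.choose_two_right s
  omega

end Aux

theorem sat_Ks_join_path_le (k s n : ℕ) (hk : 3 ≤ k) (hs : 3 ≤ s) (hn : k + s ≤ n) :
    satNumber n ((⊤ : SimpleGraph (Fin s)).graphJoin (SimpleGraph.pathGraph k)) ≤
      s * (s - 1) / 2 + s * (n - s) + satNumber (n - s) (SimpleGraph.pathGraph k) := by
  classical
  set m := n - s with hm
  have hmk : k ≤ m := by omega
  have hm0 : 0 < m := by omega
  have hs0 : 0 < s := by omega
  -- get a minimum saturated graph for pathGraph k on Fin m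
  have hne : {c : ℕ | ∃ G : SimpleGraph (Fin m),
      (SimpleGraph.pathGraph k).IsSatur G ∧ G.edgeSet.ncard = c}.Nonempty := by
    obtain ⟨G0, hG0⟩ := exists_pathSat k m (by omega)
    exact ⟨G0.edgeSet.ncard, G0, hG0, rfl⟩
  have hmem := Nat.sInf_mem hne
  obtain ⟨G', hG'sat, hG'card⟩ := hmem
  have hcardeq : G'.edgeSet.ncard = satNumber m (SimpleGraph.pathGraph k) := hG'card
  -- the join graph
  set J := (⊤ : SimpleGraph (Fin s)).graphJoin G' with hJ
  have hJsat : ((⊤ : SimpleGraph (Fin s)).graphJoin (SimpleGraph.pathGraph k)).IsSatur J :=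
    join_isSatur hs0 hm0 hG'sat
  -- transport to Fin n
  have hn' : n = s + m := by omega
  set eqv : Fin n ≃ (Fin s ⊕ Fin m) := (finCongr hn').trans finSumFinEquiv.symm with heqv
  set Gn := J.comap ⇑eqv.toEmbedding with hGn
  have hGnsat : ((⊤ : SimpleGraph (Fin s)).graphJoin (SimpleGraph.pathGraph k)).IsSatur Gn :=
    isSatur_comap eqv hJsat
  have hGncard : Gn.edgeSet.ncard = J.edgeSet.ncard :=
    ncard_eq_of_iso (SimpleGraph.Iso.comap eqv J)
  have hJcard : J.edgeSet.ncard = s * (s - 1) / 2 + s * m + G'.edgeSet.ncard := ncard_join G'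
  calc satNumber n ((⊤ : SimpleGraph (Fin s)).graphJoin (SimpleGraph.pathGraph k))
      ≤ Gn.edgeSet.ncard := Nat.sInf_le ⟨Gn, hGnsat, rfl⟩
    _ = s * (s - 1) / 2 + s * m + satNumber m (SimpleGraph.pathGraph k) := by
        rw [hGncard, hJcard, hcardeq]
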